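/- In the iterated sequence of rankings (r_j) obtained by alternating disturbance and risk updates starting from the sound ranking r_0 with domain W_1(G), once a vertex v receives a rank, it never changes: for all v ∈ dom(r*), r_{j_v}(v) = r_j(v) for all j ≥ j_v, where j_v is the minimal j with v ∈ dom(r_j). Moreover, if j_v is odd then r_j(v) = (j_v+1)/2, and if j_v is even then r_j(v) = j_v/2, for all j ≥ j_v. -/
import Mathlib


namespace GamesWithDisturbances

/-- An arena with unmodeled disturbances: vertices of Player 0, normal edges `E`,
disturbance edges `D`. -/
structure Arena (V : Type*) where
  V0 : Set V
  E : V → V → Prop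
  D : V → V → Prop

/-- A game with disturbances: an arena together with a winning condition on
infinite vertex sequences. -/
structure Game (V : Type*) where
  arena : Arena V
  Win : (ℕ → V) → Prop

variable {V M : Type*}

/-- A play: an infinite sequence of (vertex, disturbance bit). -/
abbrev Play (V : Type*) := ℕ → V × Bool

/-- A legal play: the first bit is 0, and each step uses a normal edge (bit 0)
or a disturbance edge (bit 1). -/
def IsPlay (A : Arena V) (ρ : Play V) : Prop :=
  (ρ 0).2 = false ∧
    ∀ j, if (ρ (j + 1)).2 = true then A.D (ρ j).1 (ρ (j + 1)).1
         else A.E (ρ j).1 (ρ (j + 1)).1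

/-- A strategy maps (strict history, current vertex) to the next vertex. -/
abbrev Strategy (V : Type*) := List V → V → V

/-- The strict history of a play before position `j`. -/
def hist (ρ : Play V) (j : ℕ) : List V := (List.range j).map fun i => (ρ i).1

/-- A play is consistent with a Player 0 strategy: at Player 0 vertices, if no
disturbance occurs, the next vertex is the one prescribed by the strategy. -/
def ConsistentWith (A : Arena V) (σ : Strategy V) (ρ : Play V) : Prop :=
  ∀ j, (ρ j).1 ∈ A.V0 → (ρ (j + 1)).2 = false →
    (ρ (j + 1)).1 = σ (hist ρ j) (ρ j).1

/-- A play is consistent with a Player 1 strategy. -/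
def ConsistentWith1 (A : Arena V) (τ : Strategy V) (ρ : Play V) : Prop :=
  ∀ j, (ρ j).1 ∉ A.V0 → (ρ (j + 1)).1 = τ (hist ρ j) (ρ j).1

/-- The number of disturbances of a play, an element of ℕ∞. -/
noncomputable def numDist (ρ : Play V) : ℕ∞ := {j | (ρ j).2 = true}.encard

/-- The vertex sequence of a play. -/
def playSeq (ρ : Play V) : ℕ → V := fun j => (ρ j).1

/-- The ordinal ω + 2 = {0, 1, 2, ..., ω, ω + 1}: finite values are naturals,
ω is `↑(⊤ : ℕ∞)`, and ω + 1 is `⊤`. -/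
abbrev Res : Type := WithTop ℕ∞

/-- A strategy `σ` is `α`-resilient from `v` if every play starting in `v`,
consistent with `σ`, with fewer than `α` disturbances, is winning for Player 0. -/
def Resilient (G : Game V) (σ : Strategy V) (α : Res) (v : V) : Prop :=
  ∀ ρ : Play V, IsPlay G.arena ρ → ConsistentWith G.arena σ ρ → (ρ 0).1 = v →
    (numDist ρ : Res) < α → G.Win (playSeq ρ)

/-- The resilience of a vertex. -/
noncomputable def resilience (G : Game V) (v : V) : Res :=
  sSup {α : Res | ∃ σ : Strategy V, Resilient G σ α v}

/-- Classical (disturbance-free) winning for Player 0 from `v`. -/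
def WinningFrom (G : Game V) (σ : Strategy V) (v : V) : Prop :=
  ∀ ρ : Play V, IsPlay G.arena ρ → ConsistentWith G.arena σ ρ → (ρ 0).1 = v →
    numDist ρ = 0 → G.Win (playSeq ρ)

/-- Classical (disturbance-free) winning for Player 1 from `v`. -/
def WinningFrom1 (G : Game V) (τ : Strategy V) (v : V) : Prop :=
  ∀ ρ : Play V, IsPlay G.arena ρ → ConsistentWith1 G.arena τ ρ → (ρ 0).1 = v →
    numDist ρ = 0 → ¬ G.Win (playSeq ρ)

/-- The winning region of Player 0 (disturbance-free semantics). -/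
def W0 (G : Game V) : Set V := {v | ∃ σ, WinningFrom G σ v}

/-- The winning region of Player 1 (disturbance-free semantics). -/
def W1 (G : Game V) : Set V := {v | ∃ τ, WinningFrom1 G τ v}

/-- A game is determined if every vertex is in one of the winning regions. -/
def Determined (G : Game V) : Prop := ∀ v, v ∈ W0 G ∨ v ∈ W1 G

/-- Prefix-independence of the winning condition. -/
def PrefixIndependent (G : Game V) : Prop :=
  ∀ (π : ℕ → V) (k : ℕ), G.Win π ↔ G.Win fun j => π (j + k)

/-- A strategy is positional if it only depends on the current vertex. -/
def Positional (σ : Strategy V) : Prop := ∀ h h' v, σ h v = σ h' v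

/-! ## Rankings and updates -/

/-- A ranking: a partial map from vertices to ℕ. -/
def Ranking (V : Type*) := V → Option ℕ

/-- A ranking is sound if it assigns 0 exactly to Player 1's winning region. -/
def Sound (G : Game V) (r : Ranking V) : Prop := ∀ v, r v = some 0 ↔ v ∈ W1 G

/-- `r'` refines `r`: the domain grows and values do not increase. -/
def Refines (r r' : Ranking V) : Prop :=
  ∀ v n, r v = some n → ∃ m, r' v = some m ∧ m ≤ n

/-- The set over which the disturbance update minimizes. -/
def distSet (A : Arena V) (r : Ranking V) (v : V) : Set ℕ :=
  {n | r v = some n} ∪ {n | ∃ v' m, A.D v v' ∧ r v' = some m ∧ n = m + 1}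

/-- `r'` is the disturbance update of `r`. -/
def IsDistUpdate (A : Arena V) (r r' : Ranking V) : Prop :=
  ∀ v n, r' v = some n ↔ IsLeast (distSet A r v) n

/-- The game with winning condition `Win ∩ Safety(U)`. -/
def safetyGame (G : Game V) (U : Set V) : Game V :=
  ⟨G.arena, fun π => G.Win π ∧ ∀ j, π j ∉ U⟩

/-- The set over which the risk update minimizes: `k` in the image of `r` such
that Player 1 wins `(A, Win ∩ Safety({v | r v ≤ k}))` from `v`. -/
def riskSet (G : Game V) (r : Ranking V) (v : V) : Set ℕ :=
  {k | (∃ u, r u = some k) ∧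
    v ∈ W1 (safetyGame G {w | ∃ m, m ≤ k ∧ r w = some m})}

/-- `r'` is the risk update of `r`. -/
def IsRiskUpdate (G : Game V) (r r' : Ranking V) : Prop :=
  ∀ v n, r' v = some n ↔ IsLeast (riskSet G r v) n

/-- The iterated sequence of rankings: `r 0` maps exactly `W1 G` to 0, and one
alternates disturbance updates (producing odd-indexed rankings) and risk
updates (producing even-indexed rankings). -/
def IsRankingSeq (G : Game V) (r : ℕ → Ranking V) : Prop :=
  (∀ v, (r 0 v = some 0 ↔ v ∈ W1 G) ∧ ∀ n, r 0 v = some n → n = 0) ∧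
  ∀ j, (Even j → IsDistUpdate G.arena (r j) (r (j + 1))) ∧
       (Odd j → IsRiskUpdate G (r j) (r (j + 1)))

/-! ## The rigged game -/

/-- The arena of the rigged game: Player 1 controls the original vertices
(`Sum.inl`), where he may simulate a disturbance edge or, at Player 0 vertices,
yield control by moving to the copy (`Sum.inr`); from a copy, Player 0 takes a
normal edge. There are no disturbance edges. -/
def riggedArena (A : Arena V) : Arena (V ⊕ V) where
  V0 := {x | ∃ v, x = Sum.inr v}
  E := fun x y =>
    match x, y with
    | Sum.inl v, Sum.inl v' => A.D v v' ∨ (v ∉ A.V0 ∧ A.E v v')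
    | Sum.inl v, Sum.inr v' => v ∈ A.V0 ∧ v' = v
    | Sum.inr v, Sum.inl v' => v ∈ A.V0 ∧ A.E v v'
    | Sum.inr _, Sum.inr _ => False
  D := fun _ _ => False

/-- The rigged winning condition: the sequence obtained by erasing the copy
vertices (via the homomorphism `h`) satisfies `Win`. `f` enumerates, in order,
exactly the positions carrying original vertices. -/
def riggedWin (G : Game V) (π : ℕ → V ⊕ V) : Prop :=
  ∃ (f : ℕ → ℕ) (π' : ℕ → V), StrictMono f ∧
    (∀ j, π (f j) = Sum.inl (π' j)) ∧
    (∀ k, (∀ j, k ≠ f j) → ∃ v, π k = Sum.inr v) ∧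
    G.Win π'

/-- The rigged game of `G`. -/
def rigged (G : Game V) : Game (V ⊕ V) := ⟨riggedArena G.arena, riggedWin G⟩

/-! ## Memory structures and game reductions -/

/-- A memory structure. -/
structure MemoryStructure (V M : Type*) where
  init : V → M
  upd : M → V → M

/-- The product arena `A × M`. -/
def prodArena (A : Arena V) (Mem : MemoryStructure V M) : Arena (V × M) where
  V0 := {p | p.1 ∈ A.V0}
  E := fun p q => A.E p.1 q.1 ∧ Mem.upd p.2 q.1 = q.2
  D := fun p q => A.D p.1 q.1 ∧ Mem.upd p.2 q.1 = q.2

/-- The memory state sequence along a vertex sequence. -/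
def memSeq (Mem : MemoryStructure V M) (π : ℕ → V) : ℕ → M
  | 0 => Mem.init (π 0)
  | j + 1 => Mem.upd (memSeq Mem π j) (π (j + 1))

/-- The extended play of a play in the product arena. -/
def extPlay (Mem : MemoryStructure V M) (ρ : Play V) : Play (V × M) :=
  fun j => (((ρ j).1, memSeq Mem (playSeq ρ) j), (ρ j).2)

/-- `G ≤_M G'`: `G'` is played on the product arena and every play of `G` is
won by the same player as its extension in `G'`. -/
def Reduction (G : Game V) (Mem : MemoryStructure V M) (G' : Game (V × M)) : Prop :=
  G'.arena = prodArena G.arena Mem ∧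
  ∀ ρ : Play V, IsPlay G.arena ρ →
    (G.Win (playSeq ρ) ↔ G'.Win (playSeq (extPlay Mem ρ)))

/-- The finite-state strategy implemented by a memory structure and a
next-move function. -/
def implementedBy (Mem : MemoryStructure V M) (Nxt : V → M → V) : Strategy V :=
  fun h v => Nxt v (match h with
    | [] => Mem.init v
    | w :: ws => (ws ++ [v]).foldl Mem.upd (Mem.init w))

/-! ## Subgames -/

/-- The pure safety game on the arena of `G` with unsafe set `U`. -/
def pureSafety (G : Game V) (U : Set V) : Game V :=
  ⟨G.arena, fun π => ∀ j, π j ∉ U⟩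

/-- The subgame `(A \ W, Win ∩ (V \ W)^ω)` obtained by removing `W`. -/
def subGame (G : Game V) (W : Set V) : Game {v : V // v ∉ W} where
  arena := ⟨{v | v.1 ∈ G.arena.V0}, fun v w => G.arena.E v.1 w.1,
    fun v w => G.arena.D v.1 w.1⟩
  Win := fun π => G.Win fun j => (π j).1


section AuxProof

variable {V : Type*}

private lemma bits_false {ρ : Play V} (h : numDist ρ = 0) (t : ℕ) : (ρ t).2 = false := by
  have he : {j | (ρ j).2 = true} = ∅ := by
    unfold numDist at h
    exact Set.encard_eq_zero.mp h
  have ht : t ∉ {j | (ρ j).2 = true} := by rw [he]; exact Set.notMem_empty t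
  simpa using ht

private lemma play_E {A : Arena V} {ρ : Play V} (hp : IsPlay A ρ)
    (hb : ∀ t, (ρ t).2 = false) (t : ℕ) : A.E (ρ t).1 (ρ (t + 1)).1 := by
  have h2 := hp.2 t
  rw [hb (t + 1)] at h2
  simpa using h2

private lemma mem_W1_safety {G : Game V} {U : Set V} {v : V} (hv : v ∈ U) :
    v ∈ W1 (safetyGame G U) := by
  refine ⟨fun _ w => w, fun ρ _ _ h0 _ hwin => ?_⟩
  exact hwin.2 0 (show (ρ 0).1 ∈ U by rw [h0]; exact hv)

private lemma W1_safety_mono {G : Game V} {U U' : Set V} (hUU : U ⊆ U') :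
    W1 (safetyGame G U) ⊆ W1 (safetyGame G U') := by
  rintro v ⟨τ, hτ⟩
  refine ⟨τ, fun ρ hp hc h0 hd hwin => ?_⟩
  exact hτ ρ hp hc h0 hd ⟨hwin.1, fun t ht => hwin.2 t (hUU ht)⟩

private lemma W1_safety_empty {G : Game V} : W1 (safetyGame G (∅ : Set V)) = W1 G := by
  ext v
  constructor
  · rintro ⟨τ, hτ⟩
    exact ⟨τ, fun ρ hp hc h0 hd hwin => hτ ρ hp hc h0 hd ⟨hwin, fun t => Set.notMem_empty _⟩⟩
  · rintro ⟨τ, hτ⟩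
    exact ⟨τ, fun ρ hp hc h0 hd hwin => hτ ρ hp hc h0 hd hwin.1⟩
private lemma hist_succ {ρ : Play V} (t : ℕ) :
    hist ρ t ++ [(ρ t).1] = hist ρ (t + 1) := by
  simp [hist, List.range_succ]

private lemma hist_len {ρ : Play V} (t : ℕ) : (hist ρ t).length = t := by
  simp [hist]

private lemma hist_getD {ρ : Play V} {t i : ℕ} (hit : i < t) (d : V) :
    (hist ρ t).getD i d = (ρ i).1 := by
  simp [hist, List.getD_eq_getElem?_getD, List.getElem?_range hit]

private lemma hist_drop {ρ : Play V} (t j₀ : ℕ) :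
    (hist ρ (t + j₀)).drop j₀ = hist (fun i => ρ (i + j₀)) t := by
  unfold hist
  rw [Nat.add_comm t j₀, List.range_add, List.map_append,
    List.drop_append_of_le_length (by simp)]
  have h1 : List.drop j₀ (List.map (fun i => (ρ i).1) (List.range j₀)) = [] :=
    List.drop_eq_nil_of_le (by simp)
  rw [h1, List.nil_append, List.map_map]
  apply List.map_congr_left
  intro a _
  simp [Function.comp, Nat.add_comm]
private lemma comp_W1 {G : Game V} (hpi : PrefixIndependent G) (U : Set V) :
    W1 (safetyGame G (W1 (safetyGame G U))) ⊆ W1 (safetyGame G U) := by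
  classical
  intro v hv
  obtain ⟨τ₀, hτ₀⟩ := hv
  set S : Set V := W1 (safetyGame G U) with hSdef
  have hT : ∀ u : V, ∃ τ : Strategy V, u ∈ S → WinningFrom1 (safetyGame G U) τ u := by
    intro u
    by_cases hu : u ∈ S
    · obtain ⟨τ, hτ⟩ := hu
      exact ⟨τ, fun _ => hτ⟩
    · exact ⟨fun _ w => w, fun h => absurd h hu⟩
  choose T hTspec using hT
  refine ⟨fun h w => if H : ∃ i, i < (h ++ [w]).length ∧ (h ++ [w]).getD i v ∈ S then
      T ((h ++ [w]).getD (Nat.find H) v) (h.drop (Nat.find H)) w else τ₀ h w, ?_⟩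
  intro ρ hp hc h0 hd hwin
  have hb : ∀ t, (ρ t).2 = false := bits_false hd
  by_cases hF : ∀ i, (ρ i).1 ∉ S
  · -- the play never visits S : it is consistent with τ₀
    have hc0 : ConsistentWith1 G.arena τ₀ ρ := by
      intro t hV0
      have hct := hc t hV0
      rw [hct]
      have hno : ¬ ∃ i, i < (hist ρ t ++ [(ρ t).1]).length ∧
          (hist ρ t ++ [(ρ t).1]).getD i v ∈ S := by
        rintro ⟨i, hilen, hiS⟩
        rw [hist_succ, hist_len] at hilen
        rw [hist_succ, hist_getD hilen] at hiS
        exact hF i hiS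
      simp only [dif_neg hno]
    exact hτ₀ ρ hp hc0 h0 hd ⟨hwin.1, hF⟩
  · push_neg at hF
    have hB : ∃ i, (ρ i).1 ∈ S := hF
    set j₀ := Nat.find hB with hj₀def
    have hj₀S : (ρ j₀).1 ∈ S := Nat.find_spec hB
    have hj₀min : ∀ i, i < j₀ → (ρ i).1 ∉ S := fun i hi => Nat.find_min hB hi
    set ρ' : Play V := fun i => ρ (i + j₀) with hρ'def
    have hp' : IsPlay G.arena ρ' := by
      constructor
      · exact hb (0 + j₀)
      · intro t
        have hbt : (ρ' (t + 1)).2 = false := hb (t + 1 + j₀)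
        rw [hbt]
        simp only [Bool.false_eq_true, if_false]
        show G.arena.E (ρ (t + j₀)).1 (ρ (t + 1 + j₀)).1
        rw [show t + 1 + j₀ = (t + j₀) + 1 by omega]
        exact play_E hp hb (t + j₀)
    have hd' : numDist ρ' = 0 := by
      unfold numDist
      rw [Set.encard_eq_zero]
      ext t
      simp [hρ'def, hb]
    have h0' : (ρ' 0).1 = (ρ j₀).1 := by
      show (ρ (0 + j₀)).1 = (ρ j₀).1
      rw [Nat.zero_add]
    have hc' : ConsistentWith1 G.arena (T (ρ j₀).1) ρ' := by
      intro t hV0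
      have hct := hc (t + j₀) hV0
      have H : ∃ i, i < (hist ρ (t + j₀) ++ [(ρ (t + j₀)).1]).length ∧
          (hist ρ (t + j₀) ++ [(ρ (t + j₀)).1]).getD i v ∈ S := by
        refine ⟨j₀, ?_, ?_⟩
        · rw [hist_succ, hist_len]; omega
        · rw [hist_succ, hist_getD (by omega)]; exact hj₀S
      have hfind : Nat.find H = j₀ := by
        rw [Nat.find_eq_iff]
        constructor
        · exact ⟨by rw [hist_succ, hist_len]; omega,
            by rw [hist_succ, hist_getD (by omega)]; exact hj₀S⟩
        · intro i hi hPi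
          obtain ⟨hilen, hiS⟩ := hPi
          rw [hist_succ, hist_getD (by omega)] at hiS
          exact hj₀min i hi hiS
      have e1 : (ρ' (t + 1)).1 = (ρ (t + j₀ + 1)).1 := by
        show (ρ (t + 1 + j₀)).1 = _
        rw [show t + 1 + j₀ = t + j₀ + 1 by omega]
      rw [e1, hct]
      simp only [dif_pos H, hfind]
      rw [hist_succ, hist_getD (by omega), hist_drop]
    have hres := hTspec (ρ j₀).1 hj₀S ρ' hp' hc' h0' hd'
    refine hres ⟨?_, ?_⟩
    · exact (hpi (playSeq ρ) j₀).mp hwin.1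
    · intro t
      exact hwin.2 (t + j₀)

/-- One update step preserves existing ranks; new vertices get rank `(j+2)/2`. -/
private def StepAt (r : ℕ → Ranking V) (j : ℕ) : Prop :=
  ∀ v, r (j + 1) v = r j v ∨ (r j v = none ∧ r (j + 1) v = some ((j + 2) / 2))

private lemma seq_mono {r : ℕ → Ranking V} {j : ℕ} (hIH : ∀ i, i < j → StepAt r i) :
    ∀ {i k : ℕ} {v : V} {n : ℕ}, i + k ≤ j → r i v = some n → r (i + k) v = some n := by
  intro i k
  induction k with
  | zero => intro v n _ h; exact h
  | succ p ih =>
    intro v n hle h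
    have hp : r (i + p) v = some n := ih (by omega) h
    rcases hIH (i + p) (by omega) v with he | ⟨hn, _⟩
    · rw [show i + (p + 1) = (i + p) + 1 by omega, he]; exact hp
    · rw [hn] at hp; exact absurd hp (by simp)

private lemma seq_le {r : ℕ → Ranking V} {j : ℕ} (hIH : ∀ i, i < j → StepAt r i)
    {i i' : ℕ} {v : V} {n : ℕ} (hii : i ≤ i') (hij : i' ≤ j)
    (h : r i v = some n) : r i' v = some n := by
  obtain ⟨k, rfl⟩ := Nat.exists_eq_add_of_le hii
  exact seq_mono hIH (by omega) h

private lemma seq_back {r : ℕ → Ranking V} {j : ℕ} (hIH : ∀ i, i < j → StepAt r i) :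
    ∀ {i : ℕ} {v : V} {n : ℕ}, i ≤ j → r i v = some n →
      ∀ {i'' : ℕ}, 2 * n ≤ i'' → i'' ≤ i → r i'' v = some n := by
  intro i
  induction i with
  | zero =>
    intro v n _ h i'' _ hle
    have : i'' = 0 := Nat.le_zero.mp hle
    rw [this]; exact h
  | succ p ih =>
    intro v n hij h i'' h2n hle
    rcases Nat.eq_or_lt_of_le hle with heq | hlt
    · rw [heq]; exact h
    · have hle' : i'' ≤ p := by omega
      rcases hIH p (by omega) v with he | ⟨hn, hv⟩
      · rw [he] at h; exact ih (by omega) h h2n hle'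
      · have hn2 : n = (p + 2) / 2 := by rw [h] at hv; exact Option.some.inj hv
        exfalso; omega

private lemma seq_bound {r : ℕ → Ranking V} {j : ℕ}
    (h0 : ∀ (v : V) (n : ℕ), r 0 v = some n → n = 0)
    (hIH : ∀ i, i < j → StepAt r i) :
    ∀ {i : ℕ} {v : V} {n : ℕ}, i ≤ j → r i v = some n → 2 * n ≤ i + 1 := by
  intro i
  induction i with
  | zero => intro v n _ h; have := h0 v n h; omega
  | succ p ih =>
    intro v n hij h
    rcases hIH p (by omega) v with he | ⟨hn, hv⟩
    · rw [he] at h; have := ih (by omega) h; omega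
    · rw [h] at hv; have := Option.some.inj hv; omega

private lemma risk_aux {G : Game V} (hpi : PrefixIndependent G) {r : ℕ → Ranking V}
    (hseq : IsRankingSeq G r) {j : ℕ} (hIH : ∀ i, i < j → StepAt r i)
    {k : ℕ} (hkj : 2 * k + 1 ≤ j) {v : V}
    (himg : ∃ u, r (2 * k + 1) u = some k)
    (hW : v ∈ W1 (safetyGame G {w | ∃ m, m ≤ k ∧ r (2 * k + 1) w = some m})) :
    ∃ m, m ≤ k ∧ r (2 * k + 1) v = some m := by
  rcases Nat.eq_zero_or_pos k with rfl | hkpos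
  · -- k = 0
    have hset : {w : V | ∃ m, m ≤ 0 ∧ r (2 * 0 + 1) w = some m}
        = W1 (safetyGame G (∅ : Set V)) := by
      rw [W1_safety_empty]
      ext w
      simp only [Set.mem_setOf_eq, Nat.le_zero]
      constructor
      · rintro ⟨m, rfl, hm⟩
        have h00 : r 0 w = some 0 := seq_back hIH (by omega) hm (by omega) (by omega)
        exact (hseq.1 w).1.mp h00
      · intro hw
        have h00 : r 0 w = some 0 := (hseq.1 w).1.mpr hw
        exact ⟨0, rfl, seq_le hIH (by omega) (by omega) h00⟩
    rw [hset] at hW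
    have hv1 := comp_W1 hpi (∅ : Set V) hW
    rw [W1_safety_empty] at hv1
    have h00 : r 0 v = some 0 := (hseq.1 v).1.mpr hv1
    exact ⟨0, le_refl 0, seq_le hIH (by omega) (by omega) h00⟩
  · obtain ⟨K, rfl⟩ : ∃ K, k = K + 1 := ⟨k - 1, by omega⟩
    rw [show 2 * (K + 1) + 1 = 2 * K + 3 by ring] at himg hW ⊢
    have hkj' : 2 * K + 3 ≤ j := by omega
    have hru : IsRiskUpdate G (r (2 * K + 1)) (r (2 * K + 2)) := by
      have h := (hseq.2 (2 * K + 1)).2 (Nat.odd_iff.mpr (by omega))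
      rw [show 2 * K + 1 + 1 = 2 * K + 2 by omega] at h
      exact h
    obtain ⟨u, hu⟩ := himg
    have hu2 : r (2 * K + 2) u = some (K + 1) :=
      seq_back hIH (by omega) hu (by omega) (by omega)
    -- K + 1 is in the image of r (2K+1)
    have himg1 : ∃ u', r (2 * K + 1) u' = some (K + 1) := by
      rcases hIH (2 * K + 1) (by omega) u with he | ⟨hn, hv2⟩
      · rw [show 2 * K + 1 + 1 = 2 * K + 2 by omega] at he
        rw [he] at hu2
        exact ⟨u, hu2⟩
      · exact ((hru u (K + 1)).mp hu2).1.1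
    -- the unsafe sets at steps 2K+3 and 2K+2 coincide
    have hUeq : {w : V | ∃ m, m ≤ K + 1 ∧ r (2 * K + 3) w = some m}
        = {w : V | ∃ m, m ≤ K + 1 ∧ r (2 * K + 2) w = some m} := by
      ext w
      simp only [Set.mem_setOf_eq]
      constructor
      · rintro ⟨m, hm, hw⟩
        rcases hIH (2 * K + 2) (by omega) w with he | ⟨hn, hv2⟩
        · rw [show 2 * K + 2 + 1 = 2 * K + 3 by omega] at he
          rw [he] at hw
          exact ⟨m, hm, hw⟩
        · exfalso
          rw [show 2 * K + 2 + 1 = 2 * K + 3 by omega,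
            show (2 * K + 2 + 2) / 2 = K + 2 by omega] at hv2
          rw [hv2] at hw
          have := Option.some.inj hw
          omega
      · rintro ⟨m, hm, hw⟩
        exact ⟨m, hm, seq_le hIH (by omega) (by omega) hw⟩
    -- vertices of rank ≤ K+1 at step 2K+2 are in W1 of the safety game at step 2K+1
    have hsub : {w : V | ∃ m, m ≤ K + 1 ∧ r (2 * K + 2) w = some m}
        ⊆ W1 (safetyGame G {w | ∃ m, m ≤ K + 1 ∧ r (2 * K + 1) w = some m}) := by
      rintro w ⟨m, hm, hw⟩
      have hle := (hru w m).mp hw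
      have hmem := hle.1.2
      refine W1_safety_mono (fun x hx => ?_) hmem
      obtain ⟨m', hm', hx'⟩ := hx
      exact ⟨m', hm'.trans hm, hx'⟩
    rw [hUeq] at hW
    have hW2 := W1_safety_mono hsub hW
    have hW3 := comp_W1 hpi _ hW2
    have hmem : (K + 1) ∈ riskSet G (r (2 * K + 1)) v := ⟨himg1, hW3⟩
    have hne : (riskSet G (r (2 * K + 1)) v).Nonempty := ⟨K + 1, hmem⟩
    have hleast : IsLeast (riskSet G (r (2 * K + 1)) v) (sInf (riskSet G (r (2 * K + 1)) v)) :=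
      ⟨Nat.sInf_mem hne, mem_lowerBounds.mpr fun b hb => Nat.sInf_le hb⟩
    have hv2 : r (2 * K + 2) v = some (sInf (riskSet G (r (2 * K + 1)) v)) :=
      (hru v _).mpr hleast
    exact ⟨sInf (riskSet G (r (2 * K + 1)) v), Nat.sInf_le hmem,
      seq_le hIH (by omega) (by omega) hv2⟩

private lemma master {G : Game V} (hpi : PrefixIndependent G) {r : ℕ → Ranking V}
    (hseq : IsRankingSeq G r) : ∀ j, StepAt r j := by
  have h0 : ∀ (w : V) (n : ℕ), r 0 w = some n → n = 0 := fun w n h => (hseq.1 w).2 n h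
  intro j
  induction j using Nat.strong_induction_on with
  | _ j hIH =>
    have hIH' : ∀ i, i < j → StepAt r i := hIH
    intro v
    rcases Nat.even_or_odd j with hje | hjo
    · -- disturbance update
      have hj2 : j % 2 = 0 := Nat.even_iff.mp hje
      have hupd : IsDistUpdate G.arena (r j) (r (j + 1)) := (hseq.2 j).1 hje
      rcases hjv : r j v with _ | n
      · rcases hjv1 : r (j + 1) v with _ | n'
        · left; rfl
        · -- a new rank n' appears : show n' = (j+2)/2
          have hleast := (hupd v n').mp hjv1
          rcases hleast.1 with hmem | hmem
          · exact absurd hmem.symm (by rw [hjv]; simp)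
          · obtain ⟨v', m, hDv, hv', hn'⟩ := hmem
            have hbnd := seq_bound h0 hIH' (le_refl j) hv'
            have hmj : 2 * m = j := by
              by_contra hne
              have h2m : 2 * m + 1 ≤ j := by omega
              have hv'2m : r (2 * m) v' = some m :=
                seq_back hIH' (le_refl j) hv' (by omega) (by omega)
              have hupd2 : IsDistUpdate G.arena (r (2 * m)) (r (2 * m + 1)) :=
                (hseq.2 (2 * m)).1 ⟨m, by ring⟩
              have hmem2 : (m + 1) ∈ distSet G.arena (r (2 * m)) v :=
                Set.mem_union_right _ ⟨v', m, hDv, hv'2m, rfl⟩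
              have hne2 : (distSet G.arena (r (2 * m)) v).Nonempty := ⟨m + 1, hmem2⟩
              have hl2 : IsLeast (distSet G.arena (r (2 * m)) v)
                  (sInf (distSet G.arena (r (2 * m)) v)) :=
                ⟨Nat.sInf_mem hne2, mem_lowerBounds.mpr fun b hb => Nat.sInf_le hb⟩
              have hv21 := (hupd2 v _).mpr hl2
              have := seq_le hIH' (show 2 * m + 1 ≤ j by omega) (le_refl j) hv21
              rw [hjv] at this
              exact absurd this (by simp)
            right
            exact ⟨rfl, congrArg some (by omega)⟩
      · -- rank n is preserved
        have hmem : n ∈ distSet G.arena (r j) v := Set.mem_union_left _ hjv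
        have hlb : ∀ b ∈ distSet G.arena (r j) v, n ≤ b := by
          intro b hb
          rcases hb with hb | hb
          · have : n = b := Option.some.inj (hjv.symm.trans hb)
            omega
          · obtain ⟨v', m, hDv, hv', rfl⟩ := hb
            by_contra hlt
            push_neg at hlt
            have hbnd := seq_bound h0 hIH' (le_refl j) hjv
            have hv'2m : r (2 * m) v' = some m :=
              seq_back hIH' (le_refl j) hv' (by omega) (by omega)
            have hupd2 : IsDistUpdate G.arena (r (2 * m)) (r (2 * m + 1)) :=
              (hseq.2 (2 * m)).1 ⟨m, by ring⟩
            have hmem2 : (m + 1) ∈ distSet G.arena (r (2 * m)) v :=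
              Set.mem_union_right _ ⟨v', m, hDv, hv'2m, rfl⟩
            have hne2 : (distSet G.arena (r (2 * m)) v).Nonempty := ⟨m + 1, hmem2⟩
            have hl2 : IsLeast (distSet G.arena (r (2 * m)) v)
                (sInf (distSet G.arena (r (2 * m)) v)) :=
              ⟨Nat.sInf_mem hne2, mem_lowerBounds.mpr fun b hb => Nat.sInf_le hb⟩
            have hv21 := (hupd2 v _).mpr hl2
            have hsle : sInf (distSet G.arena (r (2 * m)) v) ≤ m + 1 := Nat.sInf_le hmem2
            have hjeq := seq_le hIH' (show 2 * m + 1 ≤ j by omega) (le_refl j) hv21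
            rw [hjv] at hjeq
            have := Option.some.inj hjeq
            omega
        have hr1 := (hupd v n).mpr ⟨hmem, mem_lowerBounds.mpr hlb⟩
        left; rw [hr1]
    · -- risk update
      have hj2 : j % 2 = 1 := Nat.odd_iff.mp hjo
      have hupd : IsRiskUpdate G (r j) (r (j + 1)) := (hseq.2 j).2 hjo
      rcases hjv : r j v with _ | n
      · rcases hjv1 : r (j + 1) v with _ | n'
        · left; rfl
        · have hleast := (hupd v n').mp hjv1
          obtain ⟨⟨u, hu⟩, hWv⟩ := hleast.1
          have hbnd := seq_bound h0 hIH' (le_refl j) hu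
          have h2n : 2 * n' = j + 1 := by
            by_contra hne
            have hlt : 2 * n' + 1 ≤ j := by omega
            have hu1 : r (2 * n' + 1) u = some n' :=
              seq_back hIH' (le_refl j) hu (by omega) (by omega)
            have hseteq : {w : V | ∃ m, m ≤ n' ∧ r j w = some m}
                = {w : V | ∃ m, m ≤ n' ∧ r (2 * n' + 1) w = some m} := by
              ext w
              simp only [Set.mem_setOf_eq]
              constructor
              · rintro ⟨m, hm, hw⟩
                exact ⟨m, hm, seq_back hIH' (le_refl j) hw (by omega) (by omega)⟩
              · rintro ⟨m, hm, hw⟩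
                exact ⟨m, hm, seq_le hIH' (by omega) (le_refl j) hw⟩
            rw [hseteq] at hWv
            obtain ⟨m, hm, hv1⟩ := risk_aux hpi hseq hIH' hlt ⟨u, hu1⟩ hWv
            have := seq_le hIH' (by omega) (le_refl j) hv1
            rw [hjv] at this
            exact absurd this (by simp)
          right
          exact ⟨rfl, congrArg some (by omega)⟩
      · have hmem : n ∈ riskSet G (r j) v := ⟨⟨v, hjv⟩, mem_W1_safety ⟨n, le_refl n, hjv⟩⟩
        have hlb : ∀ b ∈ riskSet G (r j) v, n ≤ b := by
          intro b hb
          by_contra hlt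
          push_neg at hlt
          obtain ⟨⟨u, hu⟩, hWv⟩ := hb
          have hbnd := seq_bound h0 hIH' (le_refl j) hjv
          have hblt : 2 * b + 1 ≤ j := by omega
          have hu1 : r (2 * b + 1) u = some b :=
            seq_back hIH' (le_refl j) hu (by omega) (by omega)
          have hseteq : {w : V | ∃ m, m ≤ b ∧ r j w = some m}
              = {w : V | ∃ m, m ≤ b ∧ r (2 * b + 1) w = some m} := by
            ext w
            simp only [Set.mem_setOf_eq]
            constructor
            · rintro ⟨m, hm, hw⟩
              exact ⟨m, hm, seq_back hIH' (le_refl j) hw (by omega) (by omega)⟩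
            · rintro ⟨m, hm, hw⟩
              exact ⟨m, hm, seq_le hIH' (by omega) (le_refl j) hw⟩
          rw [hseteq] at hWv
          obtain ⟨m, hm, hv1⟩ := risk_aux hpi hseq hIH' hblt ⟨u, hu1⟩ hWv
          have := seq_le hIH' (by omega) (le_refl j) hv1
          rw [hjv] at this
          have := Option.some.inj this
          omega
        have hr1 := (hupd v n).mpr ⟨hmem, mem_lowerBounds.mpr hlb⟩
        left; rw [hr1]

end AuxProof

/-- In the iterated sequence of rankings, once a vertex `v`
receives a rank (at the minimal step `jv`), it never changes; moreover the rank
is `(jv+1)/2` if `jv` is odd and `jv/2` if `jv` is even. -/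
theorem rank_stable {V : Type*} (G : Game V)
    (hpi : PrefixIndependent G)
    (hdet : ∀ U : Set V, Determined (safetyGame G U))
    (r : ℕ → Ranking V) (hseq : IsRankingSeq G r)
    (v : V) (jv : ℕ) (hjv : IsLeast {j | (r j v).isSome = true} jv) :
    ∀ j, jv ≤ j → r j v = r jv v ∧
      (Odd jv → r j v = some ((jv + 1) / 2)) ∧
      (Even jv → r j v = some (jv / 2)) := by
  have hstep : ∀ i, StepAt r i := master hpi hseq
  have hIH : ∀ (j : ℕ), ∀ i, i < j → StepAt r i := fun j i _ => hstep i
  obtain ⟨hmem, hlb⟩ := hjv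
  obtain ⟨n, hn⟩ : ∃ n, r jv v = some n := by
    rcases h : r jv v with _ | n
    · exfalso
      have h2 : (r jv v).isSome = true := hmem
      rw [h] at h2
      simp at h2
    · exact ⟨n, rfl⟩
  have hval : n = (jv + 1) / 2 := by
    rcases Nat.eq_zero_or_pos jv with rfl | hpos
    · have := (hseq.1 v).2 n hn
      omega
    · obtain ⟨p, rfl⟩ : ∃ p, jv = p + 1 := ⟨jv - 1, by omega⟩
      rcases hstep p v with he | ⟨hnone, hsome⟩
      · exfalso
        have hp : (r p v).isSome = true := by rw [← he, hn]; rfl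
        have := hlb hp
        omega
      · rw [hn] at hsome
        have := Option.some.inj hsome
        omega
  intro j hj
  have hjn : r j v = some n := seq_le (hIH j) hj (le_refl j) hn
  refine ⟨by rw [hjn, hn], ?_, ?_⟩
  · intro hodd
    have h1 : jv % 2 = 1 := Nat.odd_iff.mp hodd
    rw [hjn]
    exact congrArg some (by omega)
  · intro heven
    have h1 : jv % 2 = 0 := Nat.even_iff.mp heven
    rw [hjn]
    exact congrArg some (by omega)


end GamesWithDisturbances
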